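/- The functor ψ : simp(N Fin) → Ω^rc taking a string S_* = (S₀ ← ⋯ ← S_p) to its associated rooted tree (disjoint union of the S_i plus a root) is a functor: a morphism u : [p] → [q] in simp(N Fin) with u*(R_*) = S_* induces an order-preserving, root-preserving, independence-preserving map ψ(S_*) → ψ(R_*), and this assignment respects identities and composition. -/
import Mathlib


/-- The order relation on the rooted tree associated to a string `S` of finite sets
indexed by a preorder `ι` (via its functorial system `g` of composite maps); `none` is
the adjoined root. -/
def treeLE {ι : Type} [Preorder ι] {S : ι → Type} (g : ∀ i j : ι, i ≤ j → S j → S i) :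
    Option (Σ i : ι, S i) → Option (Σ i : ι, S i) → Prop
  | none, _ => True
  | some _, none => False
  | some x, some y => ∃ h : x.1 ≤ y.1, g x.1 y.1 h y.2 = x.2

/-- The map of rooted trees `ψ(S_*) → ψ(R_*)` induced by a morphism `u` in `simp(N Fin)`
whose source is the pullback of the string `R` along `u`: it sends the root to the root
and `x ∈ S j = R (u j)` to the corresponding element of `R (u j)`. -/
def treeMap {ι κ : Type} (u : ι → κ) (R : κ → Type) :
    Option (Σ j : ι, R (u j)) → Option (Σ i : κ, R i) :=
  Option.map fun x => ⟨u x.1, x.2⟩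

/-- `ψ : simp(N Fin) → Ω^rc` is a functor: a morphism `u` of `simp(N Fin)`
(the string pulled back along `u` being the source string) induces an order-preserving,
root-preserving, independence-preserving map of the associated rooted trees, and this
assignment respects identities and composition. -/
theorem stmt_14 (p q s : ℕ) (R : Fin (s + 1) → Type) [∀ i, Fintype (R i)]
    (g : ∀ i j : Fin (s + 1), i ≤ j → R j → R i)
    (hg_id : ∀ i x, g i i le_rfl x = x)
    (hg_comp : ∀ i j k (hij : i ≤ j) (hjk : j ≤ k) (x : R k),
      g i j hij (g j k hjk x) = g i k (hij.trans hjk) x)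
    (w : Fin (q + 1) → Fin (s + 1)) (hw : Monotone w)
    (u : Fin (p + 1) → Fin (q + 1)) (hu : Monotone u) :
    -- root-preserving
    treeMap w R none = none ∧
    -- order-preserving
    (∀ a b, treeLE (fun i j h => g (w i) (w j) (hw h)) a b →
      treeLE g (treeMap w R a) (treeMap w R b)) ∧
    -- independence-preserving
    (∀ a b, ¬ treeLE (fun i j h => g (w i) (w j) (hw h)) a b →
      ¬ treeLE (fun i j h => g (w i) (w j) (hw h)) b a →
      ¬ treeLE g (treeMap w R a) (treeMap w R b) ∧
      ¬ treeLE g (treeMap w R b) (treeMap w R a)) ∧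
    -- respects identities
    treeMap (id : Fin (s + 1) → Fin (s + 1)) R = id ∧
    -- respects composition
    treeMap (w ∘ u) R = treeMap w R ∘ treeMap u (fun j => R (w j)) := by
  refine ⟨rfl, ?_, ?_, ?_, ?_⟩
  · rintro (_|x) (_|y) h
    · trivial
    · trivial
    · exact h.elim
    · obtain ⟨h1, h2⟩ := h
      exact ⟨hw h1, h2⟩
  · have key : ∀ x y : (Σ j : Fin (q + 1), R (w j)),
        ¬ treeLE (fun i j h => g (w i) (w j) (hw h)) (some x) (some y) →
        ¬ treeLE (fun i j h => g (w i) (w j) (hw h)) (some y) (some x) →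
        ¬ treeLE g (treeMap w R (some x)) (treeMap w R (some y)) := by
      rintro x y hab hba ⟨h, he⟩
      rcases le_total x.1 y.1 with h1 | h1
      · exact hab ⟨h1, he⟩
      · apply hba
        refine ⟨h1, ?_⟩
        show g (w y.1) (w x.1) (hw h1) x.2 = y.2
        have e2 : g (w y.1) (w x.1) (hw h1) x.2
            = g (w y.1) (w x.1) (hw h1) (g (w x.1) (w y.1) h y.2) := by rw [he]
        rw [e2, hg_comp]
        exact hg_id _ _
    rintro (_|x) (_|y) hab hba
    · exact absurd trivial hab
    · exact absurd trivial hab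
    · exact absurd trivial hba
    · exact ⟨key x y hab hba, key y x hba hab⟩
  · funext a; cases a <;> rfl
  · funext a; cases a <;> rfl
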